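/- arXiv:2404.11458 — 6 statements merged into one kernel-verified Lean document; each statement's English description precedes it below -/
import Mathlib

section
/- Let L be a feasible tour and suppose L = Bs.join, where Bs : List (List (Fin (2*n))) is a list of blocks, each nonempty and consisting entirely of pickup nodes or entirely of delivery nodes. If i is a pickup node, the block with index k₁ in Bs contains i, and the block with index k₂ in Bs contains the paired delivery node i + n, then k₁ < k₂. -/
/-- A visiting sequence is a list that is a permutation of `List.finRange (2 * n)`.
It is a feasible tour if every pickup node `i` (value `< n`) occurs strictly before
its paired delivery node `i + n`. -/
def IsFeasibleTour (n : ℕ) (L : List (Fin (2 * n))) : Prop :=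
  L.Perm (List.finRange (2 * n)) ∧
  ∀ i : Fin (2 * n), ∀ _h : (i : ℕ) < n,
    L.idxOf i < L.idxOf (⟨(i : ℕ) + n, by omega⟩ : Fin (2 * n))

theorem aux_lt (α : Type) [DecidableEq α] (Bs : List (List α)) (k : ℕ) (hk : k < Bs.length)
    (a : α) (ha : a ∈ Bs.get ⟨k, hk⟩) :
    List.idxOf a Bs.flatten < ((Bs.take (k+1)).flatten).length := by
  have htake : Bs.take (k+1) = Bs.take k ++ [Bs.get ⟨k, hk⟩] := by
    rw [List.take_succ, List.getElem?_eq_getElem hk]; rfl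
  have hmem : a ∈ (Bs.take (k+1)).flatten :=
    List.mem_flatten.mpr ⟨Bs.get ⟨k, hk⟩, by
      rw [htake]; exact List.mem_append_right _ (List.mem_singleton.mpr rfl), ha⟩
  have hsplit : Bs.flatten = (Bs.take (k+1)).flatten ++ (Bs.drop (k+1)).flatten := by
    conv_lhs => rw [← List.take_append_drop (k+1) Bs]
    rw [List.flatten_append]
  rw [hsplit, List.idxOf_append_of_mem hmem]
  exact List.idxOf_lt_length_iff.mpr hmem

theorem aux_ge (α : Type) [DecidableEq α] (Bs : List (List α)) (k : ℕ) (hk : k < Bs.length)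
    (a : α) (ha : a ∈ Bs.get ⟨k, hk⟩) (hnd : Bs.flatten.Nodup) :
    ((Bs.take k).flatten).length ≤ List.idxOf a Bs.flatten := by
  have hsplit : Bs.flatten = (Bs.take k).flatten ++ (Bs.drop k).flatten := by
    conv_lhs => rw [← List.take_append_drop k Bs]
    rw [List.flatten_append]
  have hgd : Bs.get ⟨k, hk⟩ ∈ Bs.drop k := by
    have h0 : 0 < (Bs.drop k).length := by simp; omega
    have h1 : (Bs.drop k)[0] = Bs[k] := by rw [List.getElem_drop]; simp
    rw [show Bs.get ⟨k, hk⟩ = Bs[k] from rfl, ← h1]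
    exact List.getElem_mem h0
  have hmem : a ∈ (Bs.drop k).flatten := List.mem_flatten.mpr ⟨_, hgd, ha⟩
  have hnot : a ∉ (Bs.take k).flatten := by
    rw [hsplit] at hnd
    exact fun hmem' => (List.disjoint_of_nodup_append hnd) hmem' hmem
  rw [hsplit, List.idxOf_append_of_notMem hnot]
  omega

/-- Precedence constraints for blocks: if a feasible tour `L` is the concatenation
of blocks `Bs` (each block nonempty and all-pickup or all-delivery), the pickup
node `i` lies in the block of index `k₁`, and its paired delivery node `i + n`
lies in the block of index `k₂`, then `k₁ < k₂`. -/
theorem block_precedence (n : ℕ) (L : List (Fin (2 * n)))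
    (Bs : List (List (Fin (2 * n))))
    (hL : IsFeasibleTour n L) (hjoin : L = Bs.flatten)
    (hblocks : ∀ B ∈ Bs, B ≠ [] ∧
      ((∀ x ∈ B, (x : ℕ) < n) ∨ (∀ x ∈ B, n ≤ (x : ℕ))))
    (i : Fin (2 * n)) (hi : (i : ℕ) < n)
    (k₁ k₂ : ℕ) (hk₁ : k₁ < Bs.length) (hk₂ : k₂ < Bs.length)
    (hmem₁ : i ∈ Bs.get ⟨k₁, hk₁⟩)
    (hmem₂ : (⟨(i : ℕ) + n, by omega⟩ : Fin (2 * n)) ∈ Bs.get ⟨k₂, hk₂⟩) :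
    k₁ < k₂ := by
  set d : Fin (2 * n) := ⟨(i : ℕ) + n, by omega⟩ with hd
  have hflat : L = Bs.flatten := hjoin
  have hnd : Bs.flatten.Nodup := by
    rw [← hflat]
    exact hL.1.symm.nodup (List.nodup_finRange _)
  have hidx : L.idxOf i < L.idxOf d := hL.2 i hi
  by_contra hcon
  push_neg at hcon
  rcases Nat.lt_or_ge k₂ k₁ with hlt | hge
  · -- k₂ < k₁ : delivery comes in strictly earlier block, contradiction
    have h1 : List.idxOf d Bs.flatten < ((Bs.take (k₂+1)).flatten).length :=
      aux_lt _ Bs k₂ hk₂ d hmem₂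
    have h2 : ((Bs.take k₁).flatten).length ≤ List.idxOf i Bs.flatten :=
      aux_ge _ Bs k₁ hk₁ i hmem₁ hnd
    have hmono : ((Bs.take (k₂+1)).flatten).length ≤ ((Bs.take k₁).flatten).length := by
      have heq : Bs.take (k₂+1) = (Bs.take k₁).take (k₂+1) := by
        rw [List.take_take]; congr 1; omega
      conv_rhs => rw [← List.take_append_drop (k₂+1) (Bs.take k₁)]
      rw [List.flatten_append, List.length_append, heq]
      omega
    rw [hflat] at hidx
    omega
  · -- k₁ = k₂ : same block contains a pickup and a delivery node
    have hk : k₁ = k₂ := by omega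
    subst hk
    obtain ⟨-, hhom⟩ := hblocks (Bs.get ⟨k₁, hk₁⟩) (Bs.get_mem _)
    rcases hhom with hp | hdel
    · have := hp d hmem₂
      simp only [hd] at this
      omega
    · exact absurd (hdel i hmem₁) (by omega)
end

section
/- For every permutation τ : Equiv.Perm (Fin n), the list obtained by concatenating, for j = 0, 1, …, n−1 in order, the two-element lists [τ j, τ j + n] (the pickup node τ j immediately followed by its paired delivery node) is a feasible tour: it is a permutation of List.finRange (2*n) and satisfies the precedence condition for every pair. -/
private lemma aux_index (n : ℕ) (l : List (Fin n)) (i : Fin n) (hi : i ∈ l) :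
    (l.flatMap fun (j : Fin n) => [(⟨(j : ℕ), by have := j.isLt; omega⟩ : Fin (2 * n)),
        (⟨(j : ℕ) + n, by have := j.isLt; omega⟩ : Fin (2 * n))]).idxOf
      (⟨(i : ℕ), by have := i.isLt; omega⟩ : Fin (2 * n)) <
    (l.flatMap fun (j : Fin n) => [(⟨(j : ℕ), by have := j.isLt; omega⟩ : Fin (2 * n)),
        (⟨(j : ℕ) + n, by have := j.isLt; omega⟩ : Fin (2 * n))]).idxOf
      (⟨(i : ℕ) + n, by have := i.isLt; omega⟩ : Fin (2 * n)) := by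
  induction l with
  | nil => simp at hi
  | cons a t ih =>
    have hin := i.isLt
    have han := a.isLt
    simp only [List.flatMap_cons, List.cons_append]
    by_cases hia : i = a
    · subst hia
      rw [List.idxOf_cons_self]
      rw [List.idxOf_cons_ne _ (by exact fun h => by simp [Fin.ext_iff] at h; omega)]
      omega
    · have hv : (i : ℕ) ≠ (a : ℕ) := fun h => hia (Fin.ext h)
      rw [List.idxOf_cons_ne _ (by simp [Fin.ext_iff]; omega),
          List.idxOf_cons_ne _ (by simp [Fin.ext_iff]; omega),
          List.idxOf_cons_ne _ (by simp [Fin.ext_iff]; omega),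
          List.idxOf_cons_ne _ (by simp [Fin.ext_iff]; omega)]
      have := ih (by simpa [hia] using hi)
      simp only [List.nil_append] at this ⊢
      omega

/-- For every permutation `τ` of the pickup indices, the visiting sequence obtained
by concatenating, for `j = 0, …, n-1` in order, the pickup node `τ j` immediately
followed by its paired delivery node `τ j + n`, is a feasible tour. -/
theorem initial_tour_feasible (n : ℕ) (τ : Equiv.Perm (Fin n)) :
    IsFeasibleTour n
      ((List.finRange n).flatMap fun j =>
        [(⟨(τ j : ℕ), by have := (τ j).isLt; omega⟩ : Fin (2 * n)),
         (⟨(τ j : ℕ) + n, by have := (τ j).isLt; omega⟩ : Fin (2 * n))]) := by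
  set L := ((List.finRange n).flatMap fun j =>
        [(⟨(τ j : ℕ), by have := (τ j).isLt; omega⟩ : Fin (2 * n)),
         (⟨(τ j : ℕ) + n, by have := (τ j).isLt; omega⟩ : Fin (2 * n))]) with hL
  have hmem : ∀ x : Fin (2 * n), x ∈ L := by
    intro x
    rw [hL]
    simp only [List.bind_eq_flatMap, List.mem_flatMap, List.mem_finRange, List.mem_cons,
      List.mem_singleton, List.not_mem_nil, or_false]
    by_cases hx : (x : ℕ) < n
    · exact ⟨τ.symm ⟨x, hx⟩, True.intro, Or.inl (by simp [Fin.ext_iff])⟩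
    · refine ⟨τ.symm ⟨(x : ℕ) - n, by have := x.isLt; omega⟩, True.intro,
        Or.inr (by simp [Fin.ext_iff]; have := x.isLt; omega)⟩
  have hlen : L.length = 2 * n := by
    rw [hL]
    simp only [List.bind_eq_flatMap, List.length_flatMap, Function.comp_def,
      List.length_cons, List.length_nil, Nat.zero_add, Nat.add_zero]
    rw [List.map_const', List.sum_replicate]
    simp [mul_comm]
  constructor
  · have hsub : (List.finRange (2*n)).Subperm L :=
      (List.nodup_finRange _).subperm (fun x _ => hmem x)
    exact (hsub.perm_of_length_le (by simp [hlen])).symm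
  · intro i hi
    have key := aux_index n ((List.finRange n).map τ) ⟨(i : ℕ), hi⟩
      (by simp; exact ⟨τ.symm ⟨i, hi⟩, by simp⟩)
    rw [List.flatMap_map] at key
    have e1 : (⟨((⟨(i : ℕ), hi⟩ : Fin n) : ℕ), by omega⟩ : Fin (2*n)) = i := by
      simp [Fin.ext_iff]
    convert key using 2
end

section
/- Let L = A ++ S ++ B be a feasible tour such that every element of S is a pickup node, or every element of S is a delivery node. Then for every list S' that is a permutation of S (S' ~ S), the list A ++ S' ++ B is a feasible tour. -/
/-- If `x ∉ S` and `x ∉ S'` with `S'.length = S.length`, then the index of `x` in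
`A ++ S' ++ B` equals its index in `A ++ S ++ B`. -/
private lemma idxOf_swap_seg_of_not_mem {α : Type*} [DecidableEq α]
    (A S S' B : List α) (hlen : S'.length = S.length) (x : α)
    (hxS : x ∉ S) (hxS' : x ∉ S') :
    (A ++ S' ++ B).idxOf x = (A ++ S ++ B).idxOf x := by
  by_cases hA : x ∈ A
  · rw [List.append_assoc, List.append_assoc, List.idxOf_append_of_mem hA,
      List.idxOf_append_of_mem hA]
  · rw [List.idxOf_append_of_notMem (by simp [hA, hxS']),
      List.idxOf_append_of_notMem (by simp [hA, hxS]),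
      List.length_append, List.length_append, hlen]

/-- If `x ∈ S` and `x ∉ A`, then the index of `x` in `A ++ S ++ B` lies in
`[A.length, A.length + S.length)`. -/
private lemma idxOf_seg_bounds {α : Type*} [DecidableEq α]
    (A S B : List α) (x : α) (hxS : x ∈ S) (hxA : x ∉ A) :
    A.length ≤ (A ++ S ++ B).idxOf x ∧
      (A ++ S ++ B).idxOf x < A.length + S.length := by
  rw [List.append_assoc, List.idxOf_append_of_notMem hxA,
    List.idxOf_append_of_mem hxS]
  have := List.idxOf_lt_length_iff.2 hxS
  omega

/-- Rearranging a contiguous same-type segment: if `A ++ S ++ B` is a feasible tour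
where all elements of `S` are pickup nodes or all are delivery nodes, then for any
permutation `S'` of `S` the list `A ++ S' ++ B` is again a feasible tour. -/
theorem same_type_segment_permute_feasible (n : ℕ)
    (A S B : List (Fin (2 * n)))
    (hL : IsFeasibleTour n (A ++ S ++ B))
    (hS : (∀ x ∈ S, (x : ℕ) < n) ∨ (∀ x ∈ S, n ≤ (x : ℕ)))
    (S' : List (Fin (2 * n))) (hperm : S'.Perm S) :
    IsFeasibleTour n (A ++ S' ++ B) := by
  obtain ⟨hp, hfeas⟩ := hL
  have hpp : (A ++ S' ++ B).Perm (A ++ S ++ B) := (hperm.append_left A).append_right B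
  have hlen := hperm.length_eq
  have hnd : (A ++ S ++ B).Nodup := hp.nodup_iff.2 (List.nodup_finRange _)
  refine ⟨hpp.trans hp, ?_⟩
  intro i hi
  set j : Fin (2 * n) := ⟨(i : ℕ) + n, by omega⟩ with hj
  have hij : i ≠ j := by
    intro h; apply_fun (Fin.val) at h; simp [hj] at h; omega
  have hiL : i ∈ A ++ S ++ B := hp.mem_iff.2 (List.mem_finRange i)
  have hjL : j ∈ A ++ S ++ B := hp.mem_iff.2 (List.mem_finRange j)
  have hfi : (A ++ S ++ B).idxOf i < (A ++ S ++ B).idxOf j := hfeas i hi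
  -- disjointness from nodup
  rw [List.append_assoc] at hnd
  have hdisj := (List.nodup_append ..).1 hnd
  obtain ⟨hndA, hndSB, hAdisj⟩ := hdisj
  have hSBdisj := (List.nodup_append ..).1 hndSB
  obtain ⟨hndS, hndB, hSdisj⟩ := hSBdisj
  rw [← List.append_assoc] at hnd
  have memcases : ∀ x : Fin (2 * n), x ∈ A ++ S ++ B → x ∈ A ∨ x ∈ S ∨ x ∈ B := by
    intro x hx; simpa [List.mem_append, or_assoc] using hx
  -- helper: index unchanged for elements not in S
  have hunch : ∀ x : Fin (2 * n), x ∉ S →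
      (A ++ S' ++ B).idxOf x = (A ++ S ++ B).idxOf x := fun x hx =>
    idxOf_swap_seg_of_not_mem A S S' B hlen x hx (fun h => hx (hperm.mem_iff.1 h))
  rcases hS with hPick | hDel
  · -- all of S are pickups, so j ∉ S
    have hjS : j ∉ S := fun h => by have := hPick j h; simp [hj] at this
    by_cases hiS : i ∈ S
    · -- i in segment; j must be in B
      have hiA : i ∉ A := fun h => hAdisj _ h _ (by simp [hiS]) rfl
      have hjA : j ∉ A := by
        intro hjA
        have hji : (A ++ S ++ B).idxOf j < A.length := by
          rw [List.idxOf_append_of_mem (by simp [hjA]), List.idxOf_append_of_mem hjA]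
          exact List.idxOf_lt_length_iff.2 hjA
        have := (idxOf_seg_bounds A S B i hiS hiA).1
        omega
      have hjB : j ∈ B := by
        rcases memcases j hjL with h | h | h
        · exact absurd h hjA
        · exact absurd h hjS
        · exact h
      have hiS' : i ∈ S' := hperm.mem_iff.2 hiS
      have h1 := idxOf_seg_bounds A S' B i hiS' hiA
      have h2 : (A ++ S' ++ B).idxOf j = A.length + S'.length + B.idxOf j := by
        rw [List.append_assoc, List.idxOf_append_of_notMem hjA,
          List.idxOf_append_of_notMem (fun h => hjS (hperm.mem_iff.1 h))]
        omega
      omega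
    · -- neither i nor j in S
      rw [hunch i hiS, hunch j hjS]
      exact hfi
  · -- all of S are deliveries, so i ∉ S
    have hiS : i ∉ S := fun h => by have := hDel i h; omega
    by_cases hjS : j ∈ S
    · -- j in segment; i must be in A
      have hjA : j ∉ A := fun h => hAdisj _ h _ (by simp [hjS]) rfl
      have hiA : i ∈ A := by
        rcases memcases i hiL with h | h | h
        · exact h
        · exact absurd h hiS
        · exfalso
          have hiB : (A ++ S ++ B).idxOf i =
              A.length + S.length + B.idxOf i := by
            rw [List.append_assoc,
              List.idxOf_append_of_notMem (fun hh => hAdisj _ hh _ (by simp [h]) rfl),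
              List.idxOf_append_of_notMem hiS]
            omega
          have := (idxOf_seg_bounds A S B j hjS hjA).2
          omega
      have hjS' : j ∈ S' := hperm.mem_iff.2 hjS
      have h1 := idxOf_seg_bounds A S' B j hjS' hjA
      have h2 : (A ++ S' ++ B).idxOf i < A.length := by
        rw [List.idxOf_append_of_mem (by simp [hiA]), List.idxOf_append_of_mem hiA]
        exact List.idxOf_lt_length_iff.2 hiA
      omega
    · rw [hunch i hiS, hunch j hjS]
      exact hfi
end

section
/- If L = A ++ M ++ [x] ++ B is a feasible tour and x is a pickup node, then A ++ [x] ++ M ++ B is a feasible tour. Dually, if L = A ++ [y] ++ M ++ B is a feasible tour and y is a delivery node, then A ++ M ++ [y] ++ B is a feasible tour. -/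
open List

variable {α : Type*} [DecidableEq α]

lemma idx_desc (A M B : List α) (x : α)
    (hnd : (A ++ (M ++ ([x] ++ B))).Nodup) (z : α)
    (hz : z ∈ A ++ (M ++ ([x] ++ B))) :
    (idxOf z A < A.length ∧
      idxOf z (A ++ (M ++ ([x] ++ B))) = idxOf z A ∧
      idxOf z (A ++ ([x] ++ (M ++ B))) = idxOf z A) ∨
    (z = x ∧
      idxOf z (A ++ (M ++ ([x] ++ B))) = A.length + M.length ∧
      idxOf z (A ++ ([x] ++ (M ++ B))) = A.length) ∨
    (z ≠ x ∧ idxOf z M < M.length ∧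
      idxOf z (A ++ (M ++ ([x] ++ B))) = A.length + idxOf z M ∧
      idxOf z (A ++ ([x] ++ (M ++ B))) = A.length + 1 + idxOf z M) ∨
    (z ≠ x ∧
      idxOf z (A ++ (M ++ ([x] ++ B))) = A.length + M.length + 1 + idxOf z B ∧
      idxOf z (A ++ ([x] ++ (M ++ B))) = A.length + M.length + 1 + idxOf z B) := by
  simp only [List.nodup_append, List.mem_append, List.mem_singleton] at hnd hz
  by_cases hA : z ∈ A
  · left
    refine ⟨List.idxOf_lt_length_iff.2 hA, idxOf_append_of_mem hA, idxOf_append_of_mem hA⟩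
  · have hz' : z ∈ M ∨ z = x ∨ z ∈ B := by tauto
    rw [idxOf_append_of_notMem hA, idxOf_append_of_notMem hA]
    by_cases hM : z ∈ M
    · have hzx : z ≠ x := by
        rintro rfl
        exact hnd.2.1.2.2 _ hM _ (by simp) rfl
      right; right; left
      refine ⟨hzx, List.idxOf_lt_length_iff.2 hM, ?_, ?_⟩
      · rw [idxOf_append_of_mem hM]
      · have : z ∈ M ++ B := List.mem_append.2 (Or.inl hM)
        rw [List.singleton_append, List.idxOf_cons_ne _ (Ne.symm hzx),
          idxOf_append_of_mem hM]
        omega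
    · by_cases hx : z = x
      · right; left
        subst hx
        refine ⟨rfl, ?_, ?_⟩
        · rw [idxOf_append_of_notMem hM, List.singleton_append,
            List.idxOf_cons_self]
          omega

        · rw [List.singleton_append, List.idxOf_cons_self]; omega
      · have hB : z ∈ B := by tauto
        right; right; right
        refine ⟨hx, ?_, ?_⟩
        · rw [idxOf_append_of_notMem hM, List.singleton_append,
            List.idxOf_cons_ne _ (Ne.symm hx)]
          omega
        · rw [List.singleton_append, List.idxOf_cons_ne _ (Ne.symm hx),
            idxOf_append_of_notMem hM]
          omega

lemma mono12 (A M B : List α) (x : α)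
    (hnd : (A ++ (M ++ ([x] ++ B))).Nodup) (i j : α)
    (hi : i ∈ A ++ (M ++ ([x] ++ B))) (hj : j ∈ A ++ (M ++ ([x] ++ B)))
    (hjx : j ≠ x)
    (h : idxOf i (A ++ (M ++ ([x] ++ B))) < idxOf j (A ++ (M ++ ([x] ++ B)))) :
    idxOf i (A ++ ([x] ++ (M ++ B))) < idxOf j (A ++ ([x] ++ (M ++ B))) := by
  rcases idx_desc A M B x hnd i hi with ⟨h1,h2,h3⟩|⟨h1,h2,h3⟩|⟨h1,h1',h2,h3⟩|⟨h1,h2,h3⟩ <;>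
    rcases idx_desc A M B x hnd j hj with ⟨g1,g2,g3⟩|⟨g1,g2,g3⟩|⟨g1,g1',g2,g3⟩|⟨g1,g2,g3⟩ <;>
    first
      | exact absurd g1 hjx
      | omega

lemma mono21 (A M B : List α) (x : α)
    (hnd : (A ++ (M ++ ([x] ++ B))).Nodup) (i j : α)
    (hi : i ∈ A ++ (M ++ ([x] ++ B))) (hj : j ∈ A ++ (M ++ ([x] ++ B)))
    (hix : i ≠ x)
    (h : idxOf i (A ++ ([x] ++ (M ++ B))) < idxOf j (A ++ ([x] ++ (M ++ B)))) :
    idxOf i (A ++ (M ++ ([x] ++ B))) < idxOf j (A ++ (M ++ ([x] ++ B))) := by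
  rcases idx_desc A M B x hnd i hi with ⟨h1,h2,h3⟩|⟨h1,h2,h3⟩|⟨h1,h1',h2,h3⟩|⟨h1,h2,h3⟩ <;>
    rcases idx_desc A M B x hnd j hj with ⟨g1,g2,g3⟩|⟨g1,g2,g3⟩|⟨g1,g1',g2,g3⟩|⟨g1,g2,g3⟩ <;>
    first
      | exact absurd h1 hix
      | omega

/-- A pickup node can be moved earlier, and a delivery node can be moved later,
while preserving feasibility: if `A ++ M ++ [x] ++ B` is a feasible tour and `x`
is a pickup node, then `A ++ [x] ++ M ++ B` is a feasible tour; dually, if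
`A ++ [y] ++ M ++ B` is a feasible tour and `y` is a delivery node, then
`A ++ M ++ [y] ++ B` is a feasible tour. -/
theorem move_pickup_earlier_delivery_later_feasible (n : ℕ) :
    (∀ (A M B : List (Fin (2 * n))) (x : Fin (2 * n)),
      IsFeasibleTour n (A ++ M ++ [x] ++ B) → (x : ℕ) < n →
      IsFeasibleTour n (A ++ [x] ++ M ++ B)) ∧
    (∀ (A M B : List (Fin (2 * n))) (y : Fin (2 * n)),
      IsFeasibleTour n (A ++ [y] ++ M ++ B) → n ≤ (y : ℕ) →
      IsFeasibleTour n (A ++ M ++ [y] ++ B)) := by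
  constructor
  · intro A M B x hfeas hx
    have hswap : ([x] ++ (M ++ B)).Perm (M ++ ([x] ++ B)) := by
      rw [← List.append_assoc, ← List.append_assoc]
      exact List.Perm.append_right B List.perm_append_comm
    have hperm21 : (A ++ ([x] ++ (M ++ B))).Perm (A ++ (M ++ ([x] ++ B))) :=
      hswap.append_left A
    have hp1 : (A ++ (M ++ ([x] ++ B))).Perm (List.finRange (2 * n)) := by
      simpa using hfeas.1
    have hnd : (A ++ (M ++ ([x] ++ B))).Nodup :=
      hp1.symm.nodup (List.nodup_finRange _)
    refine ⟨by simpa using hperm21.trans hp1, ?_⟩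
    intro i hi
    have hmem : ∀ z : Fin (2 * n), z ∈ A ++ (M ++ ([x] ++ B)) :=
      fun z => hp1.mem_iff.2 (List.mem_finRange z)
    have hjx : (⟨(i : ℕ) + n, by omega⟩ : Fin (2 * n)) ≠ x :=
      Fin.ne_of_val_ne (by simp; omega)
    have := hfeas.2 i hi
    simp only [List.append_assoc] at this ⊢
    exact mono12 A M B x hnd i _ (hmem i) (hmem _) hjx this
  · intro A M B y hfeas hy
    have hswap : ([y] ++ (M ++ B)).Perm (M ++ ([y] ++ B)) := by
      rw [← List.append_assoc, ← List.append_assoc]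
      exact List.Perm.append_right B List.perm_append_comm
    have hperm21 : (A ++ ([y] ++ (M ++ B))).Perm (A ++ (M ++ ([y] ++ B))) :=
      hswap.append_left A
    have hp2 : (A ++ ([y] ++ (M ++ B))).Perm (List.finRange (2 * n)) := by
      simpa using hfeas.1
    have hp1 : (A ++ (M ++ ([y] ++ B))).Perm (List.finRange (2 * n)) :=
      hperm21.symm.trans hp2
    have hnd : (A ++ (M ++ ([y] ++ B))).Nodup :=
      hp1.symm.nodup (List.nodup_finRange _)
    refine ⟨by simpa using hp1, ?_⟩
    intro i hi
    have hmem : ∀ z : Fin (2 * n), z ∈ A ++ (M ++ ([y] ++ B)) :=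
      fun z => hp1.mem_iff.2 (List.mem_finRange z)
    have hix : i ≠ y := Fin.ne_of_val_ne (by omega)
    have := hfeas.2 i hi
    simp only [List.append_assoc] at this ⊢
    exact mono21 A M B y hnd i _ (hmem i) (hmem _) hix this
end

section
/- Let L = A ++ X ++ M ++ Y ++ B be a feasible tour such that every element of X ++ M ++ Y is a pickup node, or every element of X ++ M ++ Y is a delivery node. Then A ++ Y ++ M ++ X ++ B is a feasible tour. -/
/-- Same-type block exchange: if `A ++ X ++ M ++ Y ++ B` is a feasible tour where
all elements of `X ++ M ++ Y` are pickup nodes, or all of them are delivery nodes,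
then swapping the blocks `X` and `Y` yields the feasible tour
`A ++ Y ++ M ++ X ++ B`. -/
theorem same_type_block_exchange_feasible (n : ℕ)
    (A X M Y B : List (Fin (2 * n)))
    (hL : IsFeasibleTour n (A ++ X ++ M ++ Y ++ B))
    (hsame : (∀ x ∈ X ++ M ++ Y, (x : ℕ) < n) ∨
             (∀ x ∈ X ++ M ++ Y, n ≤ (x : ℕ))) :
    IsFeasibleTour n (A ++ Y ++ M ++ X ++ B) := by
  obtain ⟨hperm, hord⟩ := hL
  set V : List (Fin (2 * n)) := X ++ M ++ Y with hV
  set W : List (Fin (2 * n)) := Y ++ M ++ X with hW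
  have hE1 : A ++ X ++ M ++ Y ++ B = A ++ (V ++ B) := by simp [hV, List.append_assoc]
  have hE2 : A ++ Y ++ M ++ X ++ B = A ++ (W ++ B) := by simp [hW, List.append_assoc]
  rw [hE1] at hperm hord
  rw [hE2]
  have hlen : W.length = V.length := by simp [hV, hW]; omega
  have hmemVW : ∀ v : Fin (2 * n), v ∈ V ↔ v ∈ W := by
    intro v; simp [hV, hW, List.mem_append]; tauto
  have hperm2 : (A ++ (W ++ B)).Perm (List.finRange (2 * n)) := by
    refine List.Perm.trans ?_ hperm
    rw [List.perm_iff_count]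
    intro a; simp [List.count_append, hV, hW]; omega
  have hnd : (A ++ (V ++ B)).Nodup := hperm.symm.nodup (List.nodup_finRange _)
  rw [List.nodup_append] at hnd
  obtain ⟨ndA, nd2, disjA⟩ := hnd
  rw [List.nodup_append] at nd2
  obtain ⟨ndV, ndB, disjVB⟩ := nd2
  refine ⟨hperm2, ?_⟩
  intro i hi
  set d : Fin (2 * n) := ⟨(i : ℕ) + n, by omega⟩ with hd
  have hold := hord i hi
  -- membership trichotomy
  have hmem : ∀ v : Fin (2 * n), v ∈ A ∨ v ∈ V ∨ v ∈ B := by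
    intro v
    have : v ∈ A ++ (V ++ B) := hperm.mem_iff.2 (List.mem_finRange v)
    simpa [List.mem_append] using this
  -- index formulas
  have idxA : ∀ v : Fin (2 * n), v ∈ A →
      (A ++ (V ++ B)).idxOf v = A.idxOf v ∧
      (A ++ (W ++ B)).idxOf v = A.idxOf v ∧ A.idxOf v < A.length := by
    intro v hv
    exact ⟨List.idxOf_append_of_mem hv, List.idxOf_append_of_mem hv,
      List.idxOf_lt_length_iff.2 hv⟩
  have idxV : ∀ v : Fin (2 * n), v ∈ V →
      (A ++ (V ++ B)).idxOf v = A.length + V.idxOf v ∧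
      (A ++ (W ++ B)).idxOf v = A.length + W.idxOf v ∧
      V.idxOf v < V.length ∧ W.idxOf v < W.length := by
    intro v hv
    have hvA : v ∉ A := fun h => disjA v h v (by simp [List.mem_append, hv]) rfl
    have hvW : v ∈ W := (hmemVW v).1 hv
    constructor
    · rw [List.idxOf_append_of_notMem hvA, List.idxOf_append_of_mem hv]
    constructor
    · rw [List.idxOf_append_of_notMem hvA, List.idxOf_append_of_mem hvW]
    exact ⟨List.idxOf_lt_length_iff.2 hv, List.idxOf_lt_length_iff.2 hvW⟩
  have idxB : ∀ v : Fin (2 * n), v ∈ B →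
      (A ++ (V ++ B)).idxOf v = A.length + (V.length + B.idxOf v) ∧
      (A ++ (W ++ B)).idxOf v = A.length + (V.length + B.idxOf v) := by
    intro v hv
    have hvA : v ∉ A := fun h => disjA v h v (by simp [List.mem_append, hv]) rfl
    have hvV : v ∉ V := fun h => disjVB v h v hv rfl
    have hvW : v ∉ W := fun h => hvV ((hmemVW v).2 h)
    constructor
    · rw [List.idxOf_append_of_notMem hvA, List.idxOf_append_of_notMem hvV]
    · rw [List.idxOf_append_of_notMem hvA, List.idxOf_append_of_notMem hvW, hlen]
  -- i and d cannot both be in V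
  have hnotboth : ¬ (i ∈ V ∧ d ∈ V) := by
    rintro ⟨hiV, hdV⟩
    rcases hsame with hs | hs
    · have := hs d hdV
      simp only [hd] at this
      omega
    · have := hs i hiV; omega
  rcases hmem i with hiA | hiV | hiB <;> rcases hmem d with hdA | hdV | hdB
  · obtain ⟨e1, e2, _⟩ := idxA i hiA
    obtain ⟨f1, f2, _⟩ := idxA d hdA
    rw [e1, f1] at hold; rw [e2, f2]; exact hold
  · obtain ⟨_, e2, eb⟩ := idxA i hiA
    obtain ⟨_, f2, _, _⟩ := idxV d hdV
    rw [e2, f2]; omega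
  · obtain ⟨_, e2, eb⟩ := idxA i hiA
    obtain ⟨_, f2⟩ := idxB d hdB
    rw [e2, f2]; omega
  · obtain ⟨e1, _, _, _⟩ := idxV i hiV
    obtain ⟨f1, _, _⟩ := idxA d hdA
    rw [e1, f1] at hold; omega
  · exact absurd ⟨hiV, hdV⟩ hnotboth
  · obtain ⟨_, e2, _, ew⟩ := idxV i hiV
    obtain ⟨_, f2⟩ := idxB d hdB
    rw [e2, f2]; omega
  · obtain ⟨e1, _⟩ := idxB i hiB
    obtain ⟨f1, _, fb⟩ := idxA d hdA
    rw [e1, f1] at hold; omega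
  · obtain ⟨e1, _⟩ := idxB i hiB
    obtain ⟨f1, _, fv, _⟩ := idxV d hdV
    rw [e1, f1] at hold; omega
  · obtain ⟨e1, e2⟩ := idxB i hiB
    obtain ⟨f1, f2⟩ := idxB d hdB
    rw [e1, f1] at hold; rw [e2, f2]; omega
end

section
/- Let L = A ++ D ++ M ++ P ++ B be a feasible tour such that every element of D is a delivery node and every element of P is a pickup node. Then A ++ P ++ M ++ D ++ B is a feasible tour. -/
/-- Auxiliary: index of an element of the middle block of `X ++ (Z ++ Y)`. -/
lemma idx_blk {α : Type*} [DecidableEq α] {X Z Y : List α} {a : α}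
    (h : (X ++ (Z ++ Y)).Nodup) (ha : a ∈ Z) :
    (X ++ (Z ++ Y)).idxOf a = X.length + Z.idxOf a := by
  have haX : a ∉ X := fun hx =>
    (List.disjoint_of_nodup_append h) hx (List.mem_append_left _ ha)
  rw [List.idxOf_append_of_notMem haX, List.idxOf_append_of_mem ha]

/-- Mixed-type block exchange: if `A ++ D ++ M ++ P ++ B` is a feasible tour where
all elements of `D` are delivery nodes and all elements of `P` are pickup nodes,
then swapping the delivery block `D` with the later pickup block `P` yields the
feasible tour `A ++ P ++ M ++ D ++ B`. -/
theorem mixed_type_block_exchange_feasible (n : ℕ)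
    (A D M P B : List (Fin (2 * n)))
    (hL : IsFeasibleTour n (A ++ D ++ M ++ P ++ B))
    (hD : ∀ x ∈ D, n ≤ (x : ℕ)) (hP : ∀ x ∈ P, (x : ℕ) < n) :
    IsFeasibleTour n (A ++ P ++ M ++ D ++ B) := by
  obtain ⟨hperm, hfeas⟩ := hL
  have hperm2 : (A ++ P ++ M ++ D ++ B).Perm (A ++ D ++ M ++ P ++ B) := by
    rw [List.perm_iff_count]
    intro x
    simp only [List.count_append]
    ring
  have hnodup1 : (A ++ D ++ M ++ P ++ B).Nodup :=
    hperm.nodup_iff.mpr (List.nodup_finRange _)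
  have hnodup2 : (A ++ P ++ M ++ D ++ B).Nodup := hperm2.nodup_iff.mpr hnodup1
  refine ⟨hperm2.trans hperm, ?_⟩
  intro i hi
  set j : Fin (2 * n) := ⟨(i : ℕ) + n, by omega⟩ with hjdef
  have horder := hfeas i hi
  have hiL : i ∈ A ++ D ++ M ++ P ++ B := hperm.mem_iff.mpr (List.mem_finRange i)
  have hjL : j ∈ A ++ D ++ M ++ P ++ B := hperm.mem_iff.mpr (List.mem_finRange j)
  simp only [List.mem_append] at hiL hjL
  have hiD : i ∉ D := fun h => by have := hD i h; omega
  have hjP : j ∉ P := fun h => by have := hP j h; simp [hjdef] at this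
  -- index formulas, list 1 = A ++ D ++ M ++ P ++ B
  have f1A : ∀ v : Fin (2 * n), v ∈ A →
      (A ++ D ++ M ++ P ++ B).idxOf v = A.idxOf v := by
    intro v hv
    have := idx_blk (X := ([] : List (Fin (2*n)))) (Z := A) (Y := D ++ (M ++ (P ++ B)))
      (by simpa [List.append_assoc] using hnodup1) hv
    simpa [List.append_assoc] using this
  have f1D : ∀ v : Fin (2 * n), v ∈ D →
      (A ++ D ++ M ++ P ++ B).idxOf v = A.length + D.idxOf v := by
    intro v hv
    have := idx_blk (X := A) (Z := D) (Y := M ++ (P ++ B))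
      (by simpa [List.append_assoc] using hnodup1) hv
    simpa [List.append_assoc] using this
  have f1M : ∀ v : Fin (2 * n), v ∈ M →
      (A ++ D ++ M ++ P ++ B).idxOf v = A.length + D.length + M.idxOf v := by
    intro v hv
    have := idx_blk (X := A ++ D) (Z := M) (Y := P ++ B)
      (by simpa [List.append_assoc] using hnodup1) hv
    simpa [List.append_assoc, Nat.add_assoc] using this
  have f1P : ∀ v : Fin (2 * n), v ∈ P →
      (A ++ D ++ M ++ P ++ B).idxOf v = A.length + D.length + M.length + P.idxOf v := by
    intro v hv
    have := idx_blk (X := A ++ D ++ M) (Z := P) (Y := B)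
      (by simpa [List.append_assoc] using hnodup1) hv
    simpa [List.append_assoc, Nat.add_assoc] using this
  have f1B : ∀ v : Fin (2 * n), v ∈ B →
      (A ++ D ++ M ++ P ++ B).idxOf v =
        A.length + D.length + M.length + P.length + B.idxOf v := by
    intro v hv
    have := idx_blk (X := A ++ D ++ M ++ P) (Z := B) (Y := ([] : List (Fin (2*n))))
      (by simpa [List.append_assoc] using hnodup1) hv
    simpa [List.append_assoc, Nat.add_assoc] using this
  -- index formulas, list 2 = A ++ P ++ M ++ D ++ B
  have f2A : ∀ v : Fin (2 * n), v ∈ A →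
      (A ++ P ++ M ++ D ++ B).idxOf v = A.idxOf v := by
    intro v hv
    have := idx_blk (X := ([] : List (Fin (2*n)))) (Z := A) (Y := P ++ (M ++ (D ++ B)))
      (by simpa [List.append_assoc] using hnodup2) hv
    simpa [List.append_assoc] using this
  have f2P : ∀ v : Fin (2 * n), v ∈ P →
      (A ++ P ++ M ++ D ++ B).idxOf v = A.length + P.idxOf v := by
    intro v hv
    have := idx_blk (X := A) (Z := P) (Y := M ++ (D ++ B))
      (by simpa [List.append_assoc] using hnodup2) hv
    simpa [List.append_assoc] using this
  have f2M : ∀ v : Fin (2 * n), v ∈ M →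
      (A ++ P ++ M ++ D ++ B).idxOf v = A.length + P.length + M.idxOf v := by
    intro v hv
    have := idx_blk (X := A ++ P) (Z := M) (Y := D ++ B)
      (by simpa [List.append_assoc] using hnodup2) hv
    simpa [List.append_assoc, Nat.add_assoc] using this
  have f2D : ∀ v : Fin (2 * n), v ∈ D →
      (A ++ P ++ M ++ D ++ B).idxOf v = A.length + P.length + M.length + D.idxOf v := by
    intro v hv
    have := idx_blk (X := A ++ P ++ M) (Z := D) (Y := B)
      (by simpa [List.append_assoc] using hnodup2) hv
    simpa [List.append_assoc, Nat.add_assoc] using this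
  have f2B : ∀ v : Fin (2 * n), v ∈ B →
      (A ++ P ++ M ++ D ++ B).idxOf v =
        A.length + P.length + M.length + D.length + B.idxOf v := by
    intro v hv
    have := idx_blk (X := A ++ P ++ M ++ D) (Z := B) (Y := ([] : List (Fin (2*n))))
      (by simpa [List.append_assoc] using hnodup2) hv
    simpa [List.append_assoc, Nat.add_assoc] using this
  rcases hiL with ((((hi1 | hi1) | hi1) | hi1) | hi1) <;>
    rcases hjL with ((((hj1 | hj1) | hj1) | hj1) | hj1) <;>
    first
      | exact absurd hi1 hiD
      | exact absurd hj1 hjP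
      | (first
          | (rw [f1A i hi1] at horder; rw [f2A i hi1]
             have hb := List.idxOf_lt_length_iff.mpr hi1)
          | (rw [f1M i hi1] at horder; rw [f2M i hi1]
             have hb := List.idxOf_lt_length_iff.mpr hi1)
          | (rw [f1P i hi1] at horder; rw [f2P i hi1]
             have hb := List.idxOf_lt_length_iff.mpr hi1)
          | (rw [f1B i hi1] at horder; rw [f2B i hi1]
             have hb := List.idxOf_lt_length_iff.mpr hi1))
        (first
          | (rw [f1A j hj1] at horder; rw [f2A j hj1]
             have hb' := List.idxOf_lt_length_iff.mpr hj1)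
          | (rw [f1D j hj1] at horder; rw [f2D j hj1]
             have hb' := List.idxOf_lt_length_iff.mpr hj1)
          | (rw [f1M j hj1] at horder; rw [f2M j hj1]
             have hb' := List.idxOf_lt_length_iff.mpr hj1)
          | (rw [f1B j hj1] at horder; rw [f2B j hj1]
             have hb' := List.idxOf_lt_length_iff.mpr hj1))
        omega
end
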